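/- Fix 0<q<1 and α>−1, and let T̃_k^{(α)} = Σ_{j=0}^{k} π̃_j^{(α)}. Then for all integers m≥0 and ℓ≥0: Σ_{k=0}^{m−1} (q^k;q^{−1})_ℓ · T̃_k^{(α)} (T̃_m^{(α)} − T̃_k^{(α)}) / (λ̃_k^{(α)} π̃_k^{(α)}) = ( q^{2ℓ+α+2} (q^m;q^{−1})_{ℓ+1} / ( (1−q^{ℓ+1})(1−q^{ℓ+α+2}) ) ) · T̃_m^{(α)}. -/

import Mathlib

open Finset

/-- The finite q-Pochhammer symbol `(a;q)_n = ∏_{k=0}^{n−1} (1 − a q^k)`. -/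
noncomputable def qPochN (q a : ℝ) (n : ℕ) : ℝ :=
  ∏ k ∈ Finset.range n, (1 - a * q ^ k)

/-- The infinite q-Pochhammer symbol `(a;q)_∞ = ∏_{k=0}^∞ (1 − a q^k)`. -/
noncomputable def qPochInf (q a : ℝ) : ℝ :=
  ∏' k : ℕ, (1 - a * q ^ k)

/-- `γ(u,v;q) = (q^u;q)_∞/(q^{u+v};q)_∞`. -/
noncomputable def qgamma (q u v : ℝ) : ℝ :=
  qPochInf q (q ^ u) / qPochInf q (q ^ (u + v))

/-- `r_n^{(α)} = (1−γ(n+1,α+1;q))/(1−γ(n,α+1;q))`. -/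
noncomputable def rQL (q α : ℝ) (n : ℕ) : ℝ :=
  (1 - qgamma q ((n : ℝ) + 1) (α + 1)) / (1 - qgamma q (n : ℝ) (α + 1))

/-- The birth rates `λ̃_n^{(α)} = q^{−2n−α−1}(1−q^{n+α+1})/r_n^{(α)}`. -/
noncomputable def lamQL (q α : ℝ) (n : ℕ) : ℝ :=
  q ^ (-(2 * (n : ℝ)) - α - 1) * (1 - q ^ ((n : ℝ) + α + 1)) / rQL q α n

/-- The death rates `μ̃_n^{(α)} = q^{−2n−α}(1−q^n) r_n^{(α)}`. -/
noncomputable def muQL (q α : ℝ) (n : ℕ) : ℝ :=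
  q ^ (-(2 * (n : ℝ)) - α) * (1 - q ^ (n : ℝ)) * rQL q α n

/-- `π̃_n^{(α)} = ∏_{k=0}^{n−1} λ̃_k^{(α)}/μ̃_{k+1}^{(α)}` (with `π̃_0 = 1`). -/
noncomputable def piQL (q α : ℝ) (n : ℕ) : ℝ :=
  ∏ k ∈ Finset.range n, lamQL q α k / muQL q α (k + 1)

/-- `T̃_k^{(α)} = Σ_{j=0}^{k} π̃_j^{(α)}`. -/
noncomputable def TQL (q α : ℝ) (k : ℕ) : ℝ :=
  ∑ j ∈ Finset.range (k + 1), piQL q α j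

/-- The descending q-Pochhammer symbol `(q^k;q^{−1})_ℓ = ∏_{i=0}^{ℓ−1}(1−q^{k−i})`. -/
noncomputable def qPochDesc (q : ℝ) (k ℓ : ℕ) : ℝ :=
  ∏ i ∈ Finset.range ℓ, (1 - q ^ ((k : ℝ) - (i : ℝ)))

/-!
Write `t = q^{α+1}`, `c_n = 1 - γ(n, α+1; q)` (`cQL`) and `w_n = (t;q)_{n+1}/(q;q)_n`
(`qPochRatio`). Splitting off finitely many factors of the infinite products gives
`γ(n+1, α+1; q) = G w_n` with the constant `G = (q;q)_∞/(t;q)_∞`, while `r_n = c_{n+1}/c_n`.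
The `r`'s then telescope in `π̃_n`, and since `w_{n+1} - w_n = (1-t) q^{n+1} (t;q)_{n+1}/(q;q)_{n+1}`
the partial sums are `T̃_k = c_1 w_k / ((1-t) c_{k+1})`. The `k`-th summand becomes
`q^k (q^k;q^{-1})_ℓ (w_m - w_k)` times a factor depending only on `m`, and both resulting sums are
instances of one `q`-summation by parts, because `w_{k+1}/w_k = (1 - t q^{k+1})/(1 - q^{k+1})`.
-/

open Real

section InfiniteProduct

variable {q : ℝ}

lemma multipliable_one_sub_mul_pow (hq : |q| < 1) (a : ℝ) :
    Multipliable fun k : ℕ => 1 - a * q ^ k := by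
  simpa [sub_eq_add_neg] using
    Real.multipliable_one_add_of_summable ((summable_geometric_of_abs_lt_one hq).mul_left a).neg

lemma summable_log_one_sub_mul_pow (hq : |q| < 1) (a : ℝ) :
    Summable fun k : ℕ => log (1 - a * q ^ k) := by
  simpa [sub_eq_add_neg] using
    Real.summable_log_one_add_of_summable ((summable_geometric_of_abs_lt_one hq).mul_left a).neg

lemma qPochInf_eq_qPochN_mul (hq : |q| < 1) (a : ℝ) (n : ℕ) :
    qPochInf q a = qPochN q a n * qPochInf q (a * q ^ n) := by
  have htail : Multipliable fun k : ℕ => 1 - a * q ^ (k + n) :=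
    (multipliable_one_sub_mul_pow hq (a * q ^ n)).congr fun k => by ring
  rw [qPochInf, ← Multipliable.prod_mul_tprod_nat_mul' (f := fun k => 1 - a * q ^ k) htail]
  exact congrArg _ (tprod_congr fun k => by ring)

lemma qPochInf_one (hq : |q| < 1) : qPochInf q 1 = 0 := by
  simp [qPochInf_eq_qPochN_mul hq 1 1, qPochN]

lemma one_sub_mul_pow_pos (hq0 : 0 ≤ q) (hq1 : q < 1) {a : ℝ} (ha0 : 0 ≤ a) (ha1 : a < 1)
    (k : ℕ) : 0 < 1 - a * q ^ k := by
  nlinarith [pow_le_one₀ hq0 hq1.le (n := k), pow_nonneg hq0 k]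

lemma qPochInf_eq_exp_tsum_log (hq0 : 0 ≤ q) (hq1 : q < 1) {a : ℝ} (ha0 : 0 ≤ a) (ha1 : a < 1) :
    qPochInf q a = exp (∑' k : ℕ, log (1 - a * q ^ k)) :=
  (rexp_tsum_eq_tprod (one_sub_mul_pow_pos hq0 hq1 ha0 ha1)
    (summable_log_one_sub_mul_pow (abs_lt.2 ⟨by linarith, hq1⟩) a)).symm

lemma qPochInf_pos (hq0 : 0 ≤ q) (hq1 : q < 1) {a : ℝ} (ha0 : 0 ≤ a) (ha1 : a < 1) :
    0 < qPochInf q a := by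
  rw [qPochInf_eq_exp_tsum_log hq0 hq1 ha0 ha1]
  exact exp_pos _

lemma qPochInf_lt_qPochInf (hq0 : 0 ≤ q) (hq1 : q < 1) {a b : ℝ} (hb0 : 0 ≤ b) (hba : b < a)
    (ha1 : a < 1) : qPochInf q a < qPochInf q b := by
  have hq : |q| < 1 := abs_lt.2 ⟨by linarith, hq1⟩
  rw [qPochInf_eq_exp_tsum_log hq0 hq1 (hb0.trans hba.le) ha1,
    qPochInf_eq_exp_tsum_log hq0 hq1 hb0 (hba.trans ha1), exp_lt_exp]
  refine Summable.tsum_lt_tsum (i := 0) (fun k => ?_) ?_ (summable_log_one_sub_mul_pow hq a)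
    (summable_log_one_sub_mul_pow hq b)
  · exact log_le_log (one_sub_mul_pow_pos hq0 hq1 (hb0.trans hba.le) ha1 k)
      (by nlinarith [pow_nonneg hq0 k])
  · exact log_lt_log (one_sub_mul_pow_pos hq0 hq1 (hb0.trans hba.le) ha1 0) (by simpa using hba)

end InfiniteProduct

section QGamma

variable {q : ℝ}

lemma qPochN_pos (hq0 : 0 ≤ q) (hq1 : q < 1) {a : ℝ} (ha0 : 0 ≤ a) (ha1 : a < 1) (n : ℕ) :
    0 < qPochN q a n :=
  prod_pos fun k _ => one_sub_mul_pow_pos hq0 hq1 ha0 ha1 k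

lemma qPochN_add_one (q a : ℝ) (n : ℕ) :
    qPochN q a (n + 1) = qPochN q a n * (1 - a * q ^ n) :=
  prod_range_succ _ _

noncomputable def qPochRatio (q t : ℝ) (n : ℕ) : ℝ :=
  qPochN q t (n + 1) / qPochN q q n

lemma qPochRatio_zero (q t : ℝ) : qPochRatio q t 0 = 1 - t := by
  simp [qPochRatio, qPochN]

lemma qPochRatio_pos (hq0 : 0 ≤ q) (hq1 : q < 1) {t : ℝ} (ht0 : 0 ≤ t) (ht1 : t < 1) (n : ℕ) :
    0 < qPochRatio q t n :=
  div_pos (qPochN_pos hq0 hq1 ht0 ht1 _) (qPochN_pos hq0 hq1 hq0 hq1 _)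

lemma qPochRatio_add_one_mul (hq0 : 0 ≤ q) (hq1 : q < 1) (t : ℝ) (n : ℕ) :
    qPochRatio q t (n + 1) * (1 - q ^ (n + 1)) = qPochRatio q t n * (1 - t * q ^ (n + 1)) := by
  have hq := (one_sub_mul_pow_pos hq0 hq1 hq0 hq1 n).ne'
  simp only [qPochRatio, qPochN_add_one q _ (n + 1), qPochN_add_one q q n, ← pow_succ'] at hq ⊢
  field_simp

lemma qPochRatio_add_one_sub (hq0 : 0 ≤ q) (hq1 : q < 1) (t : ℝ) (n : ℕ) :
    qPochRatio q t (n + 1) - qPochRatio q t n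
      = (1 - t) * (q ^ (n + 1) * qPochN q t (n + 1) / qPochN q q (n + 1)) := by
  have hq := (one_sub_mul_pow_pos hq0 hq1 hq0 hq1 n).ne'
  simp only [qPochRatio, qPochN_add_one q _ (n + 1), qPochN_add_one q q n, ← pow_succ'] at hq ⊢
  field_simp
  ring

lemma qgamma_zero (hq : |q| < 1) (v : ℝ) : qgamma q 0 v = 0 := by
  simp [qgamma, qPochInf_one hq]

lemma qgamma_lt_one (hq0 : 0 < q) (hq1 : q < 1) {u v : ℝ} (hu : 0 < u) (hv : 0 < v) :
    qgamma q u v < 1 := by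
  have hlt : q ^ (u + v) < q ^ u := rpow_lt_rpow_of_exponent_gt hq0 hq1 (by linarith)
  have hpos : 0 < qPochInf q (q ^ (u + v)) :=
    qPochInf_pos hq0.le hq1 (rpow_nonneg hq0.le _) (hlt.trans (rpow_lt_one hq0.le hq1 hu))
  exact (div_lt_one hpos).2 <|
    qPochInf_lt_qPochInf hq0.le hq1 (rpow_nonneg hq0.le _) hlt (rpow_lt_one hq0.le hq1 hu)

lemma qgamma_natCast_add_one (hq0 : 0 < q) (hq1 : q < 1) {v : ℝ} (hv : 0 < v) (n : ℕ) :
    qgamma q ((n : ℝ) + 1) v = qPochInf q q / qPochInf q (q ^ v) * qPochRatio q (q ^ v) n := by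
  have hq : |q| < 1 := abs_lt.2 ⟨by linarith, hq1⟩
  have ht0 : 0 ≤ q ^ v := rpow_nonneg hq0.le v
  have ht1 : q ^ v < 1 := rpow_lt_one hq0.le hq1 hv
  have hpow : q ^ ((n : ℝ) + 1) = q * q ^ n := by
    rw [rpow_add hq0, rpow_natCast, rpow_one, mul_comm]
  have hpow' : q ^ ((n : ℝ) + 1 + v) = q ^ v * q ^ (n + 1) := by
    rw [add_comm, rpow_add hq0, ← Nat.cast_add_one, rpow_natCast]
  have hQ := (qPochN_pos hq0.le hq1 hq0.le hq1 n).ne'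
  have hT := (qPochN_pos hq0.le hq1 ht0 ht1 (n + 1)).ne'
  have hI := (qPochInf_pos hq0.le hq1 (by positivity : 0 ≤ q ^ v * q ^ (n + 1))
    (by nlinarith [pow_le_one₀ hq0.le hq1.le (n := n + 1)])).ne'
  rw [qgamma, qPochRatio, hpow, hpow', qPochInf_eq_qPochN_mul hq q n,
    qPochInf_eq_qPochN_mul hq (q ^ v) (n + 1)]
  field_simp

end QGamma

section QPochDesc

lemma qPochDesc_zero_add_one (q : ℝ) (ℓ : ℕ) : qPochDesc q 0 (ℓ + 1) = 0 :=
  prod_eq_zero (mem_range.2 ℓ.succ_pos) (by simp)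

lemma qPochDesc_add_one (q : ℝ) (m ℓ : ℕ) :
    qPochDesc q m (ℓ + 1) = qPochDesc q m ℓ * (1 - q ^ ((m : ℝ) - ℓ)) :=
  prod_range_succ _ _

lemma qPochDesc_add_one_add_one (q : ℝ) (m ℓ : ℕ) :
    qPochDesc q (m + 1) (ℓ + 1) = (1 - q ^ (m + 1)) * qPochDesc q m ℓ := by
  rw [qPochDesc, prod_range_succ']
  simp only [qPochDesc, Nat.cast_add_one, Nat.cast_zero, sub_zero, add_sub_add_right_eq_sub]
  rw [mul_comm, ← Nat.cast_add_one, rpow_natCast]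

theorem sum_pow_mul_qPochDesc_mul {q s : ℝ} (hq : 0 < q) {f : ℕ → ℝ}
    (hf : ∀ k, f (k + 1) * (1 - q ^ (k + 1)) = f k * (1 - s * q ^ (k + 1))) {ℓ : ℕ}
    (hs : 1 - s * q ^ (ℓ + 1) ≠ 0) (m : ℕ) :
    ∑ k ∈ range m, q ^ k * qPochDesc q k ℓ * f k
      = q ^ ℓ * qPochDesc q m (ℓ + 1) * f m / (1 - s * q ^ (ℓ + 1)) := by
  induction m with
  | zero => simp [qPochDesc_zero_add_one]
  | succ m ih =>
    have hpow : q ^ ℓ * q ^ ((m : ℝ) - ℓ) = q ^ m := by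
      rw [rpow_sub hq, rpow_natCast, rpow_natCast, mul_div_cancel₀ _ (pow_pos hq ℓ).ne']
    rw [sum_range_succ, ih, qPochDesc_add_one, qPochDesc_add_one_add_one, div_add' _ _ _ hs,
      div_left_inj' hs]
    linear_combination (-q ^ ℓ * qPochDesc q m ℓ) * hf m - qPochDesc q m ℓ * f m * hpow

end QPochDesc

section BirthDeathRates

variable {q α : ℝ}

noncomputable def cQL (q α : ℝ) (n : ℕ) : ℝ :=
  1 - qgamma q n (α + 1)

lemma rQL_eq (q α : ℝ) (n : ℕ) : rQL q α n = cQL q α (n + 1) / cQL q α n := by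
  simp [rQL, cQL]

lemma cQL_zero (hq : |q| < 1) : cQL q α 0 = 1 := by
  simp [cQL, qgamma_zero hq]

lemma cQL_pos (hq0 : 0 < q) (hq1 : q < 1) (hα : -1 < α) (n : ℕ) : 0 < cQL q α n := by
  rcases n with _ | n
  · rw [cQL_zero (abs_lt.2 ⟨by linarith, hq1⟩)]
    exact one_pos
  · exact sub_pos.2 (qgamma_lt_one hq0 hq1 (by positivity) (by linarith))

lemma cQL_add_one (hq0 : 0 < q) (hq1 : q < 1) (hα : -1 < α) (n : ℕ) :
    cQL q α (n + 1)
      = 1 - qPochInf q q / qPochInf q (q ^ (α + 1)) * qPochRatio q (q ^ (α + 1)) n := by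
  rw [cQL, Nat.cast_add_one, qgamma_natCast_add_one hq0 hq1 (by linarith)]

lemma qPochRatio_mul_cQL_sub (hq0 : 0 < q) (hq1 : q < 1) (hα : -1 < α) (k m : ℕ) :
    qPochRatio q (q ^ (α + 1)) m * cQL q α (k + 1)
        - qPochRatio q (q ^ (α + 1)) k * cQL q α (m + 1)
      = qPochRatio q (q ^ (α + 1)) m - qPochRatio q (q ^ (α + 1)) k := by
  rw [cQL_add_one hq0 hq1 hα, cQL_add_one hq0 hq1 hα]
  ring

lemma lamQL_eq (hq0 : 0 < q) (n : ℕ) :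
    lamQL q α n = (1 - q ^ (α + 1) * q ^ n) * cQL q α n
      / (q ^ (α + 1) * q ^ n * q ^ n * cQL q α (n + 1)) := by
  have hpow : q ^ (-(2 * (n : ℝ)) - α - 1) = (q ^ (α + 1) * q ^ n * q ^ n)⁻¹ := by
    rw [show -(2 * (n : ℝ)) - α - 1 = -(α + 1 + n + n) by ring, rpow_neg hq0.le,
      rpow_add_natCast hq0.ne', rpow_add_natCast hq0.ne']
  have hpow' : q ^ ((n : ℝ) + α + 1) = q ^ (α + 1) * q ^ n := by
    rw [add_assoc, add_comm, rpow_add_natCast hq0.ne']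
  rw [lamQL, rQL_eq, hpow, hpow']
  field_simp

lemma muQL_add_one_eq (hq0 : 0 < q) (n : ℕ) :
    muQL q α (n + 1) = (1 - q ^ (n + 1)) * cQL q α (n + 2)
      / (q ^ (α + 1) * q ^ n * q ^ n * q * cQL q α (n + 1)) := by
  have hpow : q ^ (-(2 * ((n + 1 : ℕ) : ℝ)) - α) = (q ^ (α + 1) * q ^ n * q ^ n * q)⁻¹ := by
    rw [show -(2 * ((n + 1 : ℕ) : ℝ)) - α = -(α + 1 + n + n + 1) by push_cast; ring,
      rpow_neg hq0.le, rpow_add_one hq0.ne', rpow_add_natCast hq0.ne', rpow_add_natCast hq0.ne']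
  rw [muQL, rQL_eq, hpow, rpow_natCast]
  field_simp

lemma piQL_eq (hq0 : 0 < q) (hq1 : q < 1) (hα : -1 < α) (n : ℕ) :
    piQL q α n = q ^ n * qPochN q (q ^ (α + 1)) n * cQL q α 1
      / (qPochN q q n * cQL q α n * cQL q α (n + 1)) := by
  have hc := cQL_pos hq0 hq1 hα
  induction n with
  | zero =>
    simp [piQL, qPochN, cQL_zero (abs_lt.2 ⟨by linarith, hq1⟩), (hc 1).ne']
  | succ n ih =>
    have hq := (one_sub_mul_pow_pos hq0.le hq1 hq0.le hq1 n).ne'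
    have h0 := (hc n).ne'
    rw [piQL, prod_range_succ, ← piQL, ih, lamQL_eq hq0, muQL_add_one_eq hq0,
      qPochN_add_one q _ n, qPochN_add_one q q n]
    rw [← pow_succ'] at hq ⊢
    field_simp
    ring

lemma lamQL_mul_piQL (hq0 : 0 < q) (hq1 : q < 1) (hα : -1 < α) (k : ℕ) :
    lamQL q α k * piQL q α k = cQL q α 1 * qPochRatio q (q ^ (α + 1)) k
      / (q ^ (α + 1) * q ^ k * cQL q α (k + 1) ^ 2) := by
  have hc := cQL_pos hq0 hq1 hα
  rw [lamQL_eq hq0, piQL_eq hq0 hq1 hα, qPochRatio, qPochN_add_one]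
  field_simp [(hc k).ne', (hc (k + 1)).ne']

end BirthDeathRates

section PartialSums

variable {q α : ℝ}

lemma TQL_eq (hq0 : 0 < q) (hq1 : q < 1) (hα : -1 < α) (k : ℕ) :
    TQL q α k = cQL q α 1 * qPochRatio q (q ^ (α + 1)) k
      / ((1 - q ^ (α + 1)) * cQL q α (k + 1)) := by
  have hc := cQL_pos hq0 hq1 hα
  have ht := (sub_pos.2 (rpow_lt_one hq0.le hq1 (by linarith : 0 < α + 1))).ne'
  induction k with
  | zero =>
    rw [TQL, zero_add, sum_range_one, piQL, prod_range_zero, qPochRatio_zero]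
    field_simp [(hc 1).ne']
  | succ k ih =>
    have h1 := (hc (k + 1)).ne'
    have h2 := (hc (k + 2)).ne'
    have key := qPochRatio_mul_cQL_sub hq0 hq1 hα k (k + 1)
    rw [qPochRatio_add_one_sub hq0.le hq1] at key
    field_simp at key
    rw [TQL, sum_range_succ, ← TQL, ih, piQL_eq hq0 hq1 hα]
    field_simp
    linear_combination (-cQL q α 1) * key

lemma TQL_mul_sub_div_lamQL_mul_piQL (hq0 : 0 < q) (hq1 : q < 1) (hα : -1 < α) (k m : ℕ) :
    TQL q α k * (TQL q α m - TQL q α k) / (lamQL q α k * piQL q α k)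
      = q ^ (α + 1) * cQL q α 1 / ((1 - q ^ (α + 1)) ^ 2 * cQL q α (m + 1))
        * (q ^ k * (qPochRatio q (q ^ (α + 1)) m - qPochRatio q (q ^ (α + 1)) k)) := by
  have hc := cQL_pos hq0 hq1 hα
  have ht1 := (sub_pos.2 (rpow_lt_one hq0.le hq1 (by linarith : 0 < α + 1))).ne'
  have hw := (qPochRatio_pos hq0.le hq1 (rpow_nonneg hq0.le (α + 1))
    (rpow_lt_one hq0.le hq1 (by linarith : 0 < α + 1)) k).ne'
  have key := qPochRatio_mul_cQL_sub hq0 hq1 hα k m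
  rw [lamQL_mul_piQL hq0 hq1 hα, TQL_eq hq0 hq1 hα k, TQL_eq hq0 hq1 hα m]
  field_simp [(hc 1).ne', (hc (k + 1)).ne', (hc (m + 1)).ne']
  linear_combination key

lemma sum_qPochDesc_mul_TQL_mul_sub (hq0 : 0 < q) (hq1 : q < 1) (hα : -1 < α) (m ℓ : ℕ) :
    ∑ k ∈ range m,
        qPochDesc q k ℓ * (TQL q α k * (TQL q α m - TQL q α k)) / (lamQL q α k * piQL q α k)
      = q ^ (α + 1) * q ^ ℓ * q ^ (ℓ + 1) * qPochDesc q m (ℓ + 1)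
          / ((1 - q ^ (ℓ + 1)) * (1 - q ^ (α + 1) * q ^ (ℓ + 1))) * TQL q α m := by
  have ht0 : 0 ≤ q ^ (α + 1) := rpow_nonneg hq0.le _
  have ht1 : q ^ (α + 1) < 1 := rpow_lt_one hq0.le hq1 (by linarith)
  have hqℓ : q ^ (ℓ + 1) < 1 := pow_lt_one₀ hq0.le hq1 ℓ.succ_ne_zero
  have hq1ℓ : 1 - 1 * q ^ (ℓ + 1) ≠ 0 := by linarith
  have htℓ : 1 - q ^ (α + 1) * q ^ (ℓ + 1) ≠ 0 := by nlinarith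
  have ht := (sub_pos.2 ht1).ne'
  calc _ = q ^ (α + 1) * cQL q α 1 / ((1 - q ^ (α + 1)) ^ 2 * cQL q α (m + 1))
        * (qPochRatio q (q ^ (α + 1)) m * ∑ k ∈ range m, q ^ k * qPochDesc q k ℓ * 1
          - ∑ k ∈ range m, q ^ k * qPochDesc q k ℓ * qPochRatio q (q ^ (α + 1)) k) := by
        rw [mul_sub, mul_sum, mul_sum, mul_sum, ← sum_sub_distrib]
        refine sum_congr rfl fun k _ => ?_
        rw [mul_div_assoc, TQL_mul_sub_div_lamQL_mul_piQL hq0 hq1 hα]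
        ring
    _ = _ := by
        rw [sum_pow_mul_qPochDesc_mul hq0 (fun _ => by ring) hq1ℓ,
          sum_pow_mul_qPochDesc_mul hq0 (qPochRatio_add_one_mul hq0.le hq1 _) htℓ,
          TQL_eq hq0 hq1 hα]
        rw [one_mul] at hq1ℓ
        field_simp
        ring

end PartialSums

/-- Lemma 6.13, equation (6.38): for all `m, ℓ ≥ 0`,
`Σ_{k=0}^{m−1} (q^k;q^{−1})_ℓ T̃_k (T̃_m − T̃_k)/(λ̃_k π̃_k)
  = (q^{2ℓ+α+2} (q^m;q^{−1})_{ℓ+1} / ((1−q^{ℓ+1})(1−q^{ℓ+α+2}))) T̃_m`. -/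
theorem modified_qLaguerre_T_sum_finite
    (q α : ℝ) (hq0 : 0 < q) (hq1 : q < 1) (hα : -1 < α) (m ℓ : ℕ) :
    ∑ k ∈ Finset.range m,
        qPochDesc q k ℓ * (TQL q α k * (TQL q α m - TQL q α k))
          / (lamQL q α k * piQL q α k)
      = q ^ (2 * (ℓ : ℝ) + α + 2) * qPochDesc q m (ℓ + 1)
          / ((1 - q ^ ((ℓ : ℝ) + 1)) * (1 - q ^ ((ℓ : ℝ) + α + 2)))
        * TQL q α m := by
  have hpow₁ : q ^ (2 * (ℓ : ℝ) + α + 2) = q ^ (α + 1) * q ^ ℓ * q ^ (ℓ + 1) := by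
    rw [show 2 * (ℓ : ℝ) + α + 2 = α + 1 + ℓ + (ℓ + 1 : ℕ) by push_cast; ring,
      rpow_add_natCast hq0.ne', rpow_add_natCast hq0.ne']
  have hpow₂ : q ^ ((ℓ : ℝ) + 1) = q ^ (ℓ + 1) := by
    rw [← Nat.cast_add_one, rpow_natCast]
  have hpow₃ : q ^ ((ℓ : ℝ) + α + 2) = q ^ (α + 1) * q ^ (ℓ + 1) := by
    rw [show (ℓ : ℝ) + α + 2 = α + 1 + (ℓ + 1 : ℕ) by push_cast; ring, rpow_add_natCast hq0.ne']
  rw [hpow₁, hpow₂, hpow₃]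
  exact sum_qPochDesc_mul_TQL_mul_sub hq0 hq1 hα m ℓ
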